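/- In the standard setup, suppose a = b_p⁻ and c = b_q⁺ are distinct vertices for some p < q with ac ∈ E(G). Then (1) either both b_p, b_q ∈ N(u)∖N(v), or both b_p, b_q ∈ N(v)∖N(u); and (2) none of b_p v⁻⁻, b_p v⁺⁺, b_q v⁻⁻, b_q v⁺⁺ is an edge of G. -/

import Mathlib

/-
Each forbidden configuration closes a cycle through `u` and all vertices of the longest cycle `C`,
which is one vertex longer than `C`. Indexing `C` by `ℤ` with `v` at `0`, `b_p` at `p` and `b_q`
at `q`, every such cycle is a concatenation of arcs of `C` joined by the chord `b_p⁻ b_q⁺`, the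
edges at `u` and `v`, and the edge assumed to exist. The claims about `v⁺⁺` are the claims about
`v⁻⁻` for the reversed orientation `i ↦ n - i` of `C`, which exchanges the roles of `b_p` and `b_q`.
-/

open scoped Classical

namespace Paper

noncomputable section

variable {V : Type*}

/-- degree as cardinality of neighbor set -/
def deg (G : SimpleGraph V) (x : V) : ℕ := (G.neighborSet x).ncard

/-- G is 1-tough -/
def OneTough (G : SimpleGraph V) : Prop :=
  ∀ S : Set V, S.Nonempty → Nat.card ((G.induce Sᶜ).ConnectedComponent) ≤ S.ncard

def IsIndepTriple (G : SimpleGraph V) (s : Finset V) : Prop :=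
  s.card = 3 ∧ ∀ x ∈ s, ∀ y ∈ s, x ≠ y → ¬ G.Adj x y

def sigma3 [Fintype V] (G : SimpleGraph V) : ℕ :=
  if ∃ s : Finset V, IsIndepTriple G s then
    sInf {k | ∃ s : Finset V, IsIndepTriple G s ∧ ∑ x ∈ s, deg G x = k}
  else 3 * (Fintype.card V - 1)

def NC2 [Fintype V] (G : SimpleGraph V) : ℕ :=
  if G = ⊤ then Fintype.card V - 1
  else sInf {k | ∃ x y : V, G.dist x y = 2 ∧ (G.neighborSet x ∪ G.neighborSet y).ncard = k}

def circumference (G : SimpleGraph V) : ℕ :=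
  sSup {k | ∃ (a : V) (w : G.Walk a a), w.IsCycle ∧ w.length = k}

def IsLongestCycle (G : SimpleGraph V) {a : V} (c : G.Walk a a) : Prop :=
  c.IsCycle ∧ ∀ (b : V) (w : G.Walk b b), w.IsCycle → w.length ≤ c.length

/-- successor of a vertex along the oriented cycle `c` (identity off the cycle) -/
def cSucc [DecidableEq V] {G : SimpleGraph V} {a : V} (c : G.Walk a a) (x : V) : V :=
  if h : x ∈ c.support.tail then c.support.tail.next x h else x

/-- predecessor of a vertex along the oriented cycle `c` (identity off the cycle) -/
def cPred [DecidableEq V] {G : SimpleGraph V} {a : V} (c : G.Walk a a) (x : V) : V :=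
  if h : x ∈ c.support.tail then c.support.tail.prev x h else x

/-- vertices strictly between `x` and `y` going forward along `c` -/
def arc [DecidableEq V] {G : SimpleGraph V} {a : V} (c : G.Walk a a) (x y : V) : Set V :=
  {z | ∃ i k : ℕ, 0 < i ∧ i < k ∧ k < c.length ∧ (cSucc c)^[k] x = y ∧ z = (cSucc c)^[i] x}

/-- length of the interval of the cycle `c` starting at `b` determined by `B` -/
def intervalLen [DecidableEq V] {G : SimpleGraph V} {a : V} (c : G.Walk a a)
    (B : Set V) (b : V) : ℕ :=
  sInf {k | 0 < k ∧ (cSucc c)^[k] b ∈ B}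

/-- inner vertices of the interval of the cycle `c` starting at `b` determined by `B` -/
def innerVerts [DecidableEq V] {G : SimpleGraph V} {a : V} (c : G.Walk a a)
    (B : Set V) (b : V) : Set V :=
  {x | ∃ i, 0 < i ∧ i < intervalLen c B b ∧ x = (cSucc c)^[i] b}

/-- the union of the neighborhoods of the vertices in `S` -/
def nbhdSet (G : SimpleGraph V) (S : Set V) : Set V := {z | ∃ y ∈ S, G.Adj y z}

/-- a set of vertices is independent -/
def IsIndepSet (G : SimpleGraph V) (S : Set V) : Prop :=
  ∀ x ∈ S, ∀ y ∈ S, ¬ G.Adj x y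

section Cycle

variable {G : SimpleGraph V} {a : V} {c : G.Walk a a}

theorem mem_support_tail_iff (hc : c.IsCycle) {x : V} : x ∈ c.support.tail ↔ x ∈ c.support := by
  rw [c.mem_support_iff, or_iff_right_of_imp]
  rintro rfl
  exact SimpleGraph.Walk.end_mem_tail_support hc.not_nil

theorem exists_eq_getElem (hc : c.IsCycle) {x : V} (hx : x ∈ c.support) :
    ∃ (j : ℕ) (hj : j < c.length), c.support.tail[j]'(by simpa using hj) = x := by
  obtain ⟨j, hj, rfl⟩ := List.getElem_of_mem ((mem_support_tail_iff hc).mpr hx)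
  exact ⟨j, by simpa using hj, rfl⟩

theorem exists_isCycle_of_isChain {l : List V} (hne : l ≠ []) (hnd : l.Nodup)
    (hchain : l.IsChain G.Adj) (hclose : G.Adj (l.getLast hne) (l.head hne))
    (hl : 3 ≤ l.length) : ∃ (x : V) (p : G.Walk x x), p.IsCycle ∧ p.length = l.length := by
  let p := SimpleGraph.Walk.ofSupport l hne hchain
  have hp : p.IsPath := by
    rw [SimpleGraph.Walk.isPath_def, SimpleGraph.Walk.support_ofSupport]
    exact hnd
  refine ⟨_, .cons hclose p, (SimpleGraph.Walk.cons_isCycle_iff p hclose).mpr ⟨hp, fun he => ?_⟩, ?_⟩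
  · have := hp.length_eq_one_of_mem_edges (Sym2.eq_swap ▸ he)
    simp only [p, SimpleGraph.Walk.length_ofSupport] at this
    omega
  · simp only [SimpleGraph.Walk.length_cons, p, SimpleGraph.Walk.length_ofSupport]
    omega

theorem IsLongestCycle.le_length_of_injOn (hc : IsLongestCycle G c) {w : ℕ → V} {m : ℕ}
    (hm : 3 ≤ m) (hw : Set.InjOn w (Set.Iio m)) (hadj : ∀ i, i + 1 < m → G.Adj (w i) (w (i + 1)))
    (hclose : G.Adj (w (m - 1)) (w 0)) : m ≤ c.length := by
  have hne : (List.range m).map w ≠ [] := by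
    simp only [ne_eq, List.map_eq_nil_iff, List.range_eq_nil]
    omega
  obtain ⟨x, p, hp, hlen⟩ := exists_isCycle_of_isChain hne
    (List.nodup_range.map_on fun i hi j hj => hw (by simpa using hi) (by simpa using hj))
    ((List.isChain_map w).mpr ((List.isChain_range _ m).mpr fun i hi => hadj i (by omega)))
    (by simpa [List.getLast_map, List.getLast_range, List.head_map] using hclose) (by simpa)
  simpa [hlen] using hc.2 x p hp

end Cycle

section CycleOrder

variable [DecidableEq V] {G : SimpleGraph V} {a : V} {c : G.Walk a a}

theorem cSucc_of_notMem {x : V} (hx : x ∉ c.support) : cSucc c x = x :=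
  dif_neg fun h => hx (List.mem_of_mem_tail h)

theorem mem_support_of_iterate_cSucc {x : V} {k : ℕ} (h : (cSucc c)^[k] x ∈ c.support) :
    x ∈ c.support := by
  by_contra hx
  rw [Function.iterate_fixed (cSucc_of_notMem hx)] at h
  exact hx h

theorem cSucc_getElem (hc : c.IsCycle) {j : ℕ} (hj : j < c.length) :
    cSucc c (c.support.tail[j]'(by simpa using hj)) =
      c.support.tail[(j + 1) % c.length]'(by simpa using Nat.mod_lt _ (by omega)) := by
  rw [cSucc, dif_pos (List.getElem_mem _), List.next_getElem _ hc.support_nodup]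
  simp

theorem iterate_cSucc_getElem (hc : c.IsCycle) {j : ℕ} (hj : j < c.length) (k : ℕ) :
    (cSucc c)^[k] (c.support.tail[j]'(by simpa using hj)) =
      c.support.tail[(j + k) % c.length]'(by simpa using Nat.mod_lt _ (by omega)) := by
  induction k with
  | zero => simp [Nat.mod_eq_of_lt hj]
  | succ k ih =>
    rw [Function.iterate_succ_apply', ih, cSucc_getElem hc (Nat.mod_lt _ (by omega))]
    simp [Nat.add_mod, ← add_assoc]

theorem iterate_cSucc_mem_support (hc : c.IsCycle) {x : V} (hx : x ∈ c.support) (k : ℕ) :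
    (cSucc c)^[k] x ∈ c.support := by
  obtain ⟨j, hj, rfl⟩ := exists_eq_getElem hc hx
  rw [iterate_cSucc_getElem hc hj, ← mem_support_tail_iff hc]
  exact List.getElem_mem _

theorem iterate_cSucc_length (hc : c.IsCycle) {x : V} (hx : x ∈ c.support) :
    (cSucc c)^[c.length] x = x := by
  obtain ⟨j, hj, rfl⟩ := exists_eq_getElem hc hx
  simp only [iterate_cSucc_getElem hc hj, Nat.add_mod_right, Nat.mod_eq_of_lt hj]

theorem injOn_iterate_cSucc (hc : c.IsCycle) {x : V} (hx : x ∈ c.support) :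
    Set.InjOn (fun k => (cSucc c)^[k] x) (Set.Iio c.length) := by
  obtain ⟨j, hj, rfl⟩ := exists_eq_getElem hc hx
  intro k hk l hl h
  simp only [iterate_cSucc_getElem hc hj, hc.support_nodup.getElem_inj_iff] at h
  have := Nat.ModEq.add_left_cancel' j h
  rwa [Nat.ModEq, Nat.mod_eq_of_lt hk, Nat.mod_eq_of_lt hl] at this

theorem adj_cSucc (hc : c.IsCycle) {x : V} (hx : x ∈ c.support) : G.Adj x (cSucc c x) := by
  obtain ⟨j, hj, rfl⟩ := exists_eq_getElem hc hx
  have getVert_succ (i : ℕ) (hi : i < c.length) :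
      c.support.tail[i]'(by simpa using hi) = c.getVert (i + 1) := by
    rw [List.getElem_tail, SimpleGraph.Walk.getVert_eq_support_getElem _ hi]
  rw [cSucc_getElem hc hj, getVert_succ _ hj, getVert_succ _ (Nat.mod_lt _ (by omega))]
  rcases (show j + 1 < c.length ∨ j + 1 = c.length by omega) with h | h
  · rw [Nat.mod_eq_of_lt h]
    exact c.adj_getVert_succ h
  · rw [h, Nat.mod_self, SimpleGraph.Walk.getVert_length]
    simpa using c.adj_getVert_succ (i := 0) (by omega)

theorem cPred_cSucc (hc : c.IsCycle) {x : V} (hx : x ∈ c.support) : cPred c (cSucc c x) = x := by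
  have hx' := (mem_support_tail_iff hc).mpr hx
  rw [cSucc, dif_pos hx', cPred, dif_pos (List.next_mem _ _ _)]
  exact List.prev_next _ hc.support_nodup _ _

end CycleOrder

section CycleAt

variable [DecidableEq V] {G : SimpleGraph V} {a : V}

/-- The index `i` is read modulo `c.length`, so `cycleAt c v (-1)` is the predecessor of `v`. -/
def cycleAt (c : G.Walk a a) (v : V) (i : ℤ) : V :=
  (cSucc c)^[(i % c.length).toNat] v

variable {c : G.Walk a a} {v : V}

theorem cycleAt_zero : cycleAt c v 0 = v := by simp [cycleAt]

theorem cycleAt_congr {i j : ℤ} (h : i ≡ j [ZMOD c.length]) : cycleAt c v i = cycleAt c v j := by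
  rw [cycleAt, cycleAt, h]

theorem cycleAt_periodic : Function.Periodic (cycleAt c v) c.length :=
  fun _ => cycleAt_congr Int.add_modEq_right

variable (hc : c.IsCycle) (hv : v ∈ c.support)
include hc hv

theorem cycleAt_natCast (m : ℕ) : cycleAt c v m = (cSucc c)^[m] v := by
  rw [cycleAt, ← Int.natCast_mod, Int.toNat_natCast,
    Function.IsPeriodicPt.iterate_mod_apply (iterate_cSucc_length hc hv)]

theorem cSucc_cycleAt (i : ℤ) : cSucc c (cycleAt c v i) = cycleAt c v (i + 1) := by
  have hn : (c.length : ℤ) ≠ 0 := by have := hc.three_le_length; omega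
  rw [cycleAt_congr ((Int.mod_modEq i _).symm.add_right 1),
    ← Int.toNat_of_nonneg (Int.emod_nonneg i hn), ← Nat.cast_succ, cycleAt_natCast hc hv,
    Function.iterate_succ_apply']
  rfl

theorem iterate_cSucc_cycleAt (i : ℤ) (m : ℕ) :
    (cSucc c)^[m] (cycleAt c v i) = cycleAt c v (i + m) := by
  induction m with
  | zero => simp
  | succ m ih =>
    rw [Function.iterate_succ_apply', ih, cSucc_cycleAt hc hv, Nat.cast_succ, add_assoc]

theorem cycleAt_mem_support (i : ℤ) : cycleAt c v i ∈ c.support :=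
  iterate_cSucc_mem_support hc hv _

theorem cPred_cycleAt (i : ℤ) : cPred c (cycleAt c v i) = cycleAt c v (i - 1) := by
  rw [← sub_add_cancel i 1, ← cSucc_cycleAt hc hv, cPred_cSucc hc (cycleAt_mem_support hc hv _),
    add_sub_cancel_right]

theorem eq_of_cycleAt_eq {w i j : ℤ} (hi : w ≤ i ∧ i < w + c.length)
    (hj : w ≤ j ∧ j < w + c.length) (h : cycleAt c v i = cycleAt c v j) : i = j := by
  have hn : (0 : ℤ) < c.length := by have := hc.three_le_length; omega
  have := Int.emod_nonneg i hn.ne'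
  have := Int.emod_nonneg j hn.ne'
  have := Int.emod_lt_of_pos i hn
  have := Int.emod_lt_of_pos j hn
  have hmod : i ≡ j [ZMOD c.length] := by
    have := injOn_iterate_cSucc hc hv (Set.mem_Iio.mpr (by omega)) (Set.mem_Iio.mpr (by omega)) h
    unfold Int.ModEq
    omega
  have := Int.eq_zero_of_abs_lt_dvd hmod.dvd (abs_sub_lt_iff.mpr (by omega))
  omega

theorem eq_cycleAt_of_iterate_cSucc {x : V} (hx : x ∈ c.support) {k : ℕ} (hk : k ≤ c.length)
    (h : (cSucc c)^[k] x = v) : x = cycleAt c v (c.length - k) := by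
  conv_lhs => rw [← iterate_cSucc_length hc hx, ← Nat.sub_add_cancel hk,
    Function.iterate_add_apply, h]
  rw [← cycleAt_natCast hc hv, Nat.cast_sub hk]

end CycleAt

/-- `f i` is the vertex `i` steps after `v = f 0` on a longest cycle of length `n`, and `u` is off
the cycle with `v⁺ = f 1` and `v⁻ = f (-1)` as neighbours. The last field says that `u` cannot be
inserted: there is no cycle `u, f (g 0), …, f (g (n - 1)), u` through all vertices of the cycle
(they are distinct because the indices `g i` are distinct and lie in a window of length `n`). -/
structure CycleFrame (G : SimpleGraph V) (u : V) (f : ℤ → V) (n : ℕ) : Prop where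
  three_le : 3 ≤ n
  periodic : Function.Periodic f n
  adj_add_one : ∀ i, G.Adj (f i) (f (i + 1))
  adj_one : G.Adj u (f 1)
  adj_neg_one : G.Adj u (f (-1))
  not_adj_last : ∀ (g : ℕ → ℤ) (w : ℤ), (∀ i < n, w ≤ g i ∧ g i < w + n) →
    (∀ i < n, ∀ j < n, g i = g j → i = j) → G.Adj u (f (g 0)) →
    (∀ i, i + 1 < n → G.Adj (f (g i)) (f (g (i + 1)))) → ¬ G.Adj (f (g (n - 1))) u

/-- `b_p = f p` and `b_q = f q` lie in this order between `v⁺` and `v⁻`, and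
`b_p⁻ = f (p - 1)` is adjacent to `b_q⁺ = f (q + 1)`. -/
structure IsChord (G : SimpleGraph V) (f : ℤ → V) (n : ℕ) (p q : ℤ) : Prop where
  pos : 0 < p
  lt : p < q
  lt_length : q < n
  adj : G.Adj (f (p - 1)) (f (q + 1))

theorem IsChord.reflect {G : SimpleGraph V} {f : ℤ → V} {n : ℕ} {p q : ℤ}
    (hc : IsChord G f n p q) : IsChord G (fun i => f (n - i)) n (n - q) (n - p) where
  pos := by have := hc.lt_length; omega
  lt := by have := hc.lt; omega
  lt_length := by have := hc.pos; omega
  adj := by convert hc.adj.symm using 2 <;> ring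

namespace CycleFrame

variable {G : SimpleGraph V} {u : V} {f : ℤ → V} {n : ℕ} (S : CycleFrame G u f n) {p q : ℤ}
include S

theorem adj_of_eq_add_one {i j : ℤ} (h : j = i + 1) : G.Adj (f i) (f j) :=
  h ▸ S.adj_add_one i

theorem adj_of_add_one_eq {i j : ℤ} (h : i = j + 1) : G.Adj (f i) (f j) :=
  (S.adj_of_eq_add_one h).symm

theorem apply_natCast_add (i : ℤ) : f (n + i) = f i := by
  rw [add_comm]
  exact S.periodic i

theorem reflect : CycleFrame G u (fun i => f (n - i)) n where
  three_le := S.three_le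
  periodic i := by simp only [sub_add_eq_sub_sub, S.periodic.sub_eq]
  adj_add_one i := by simpa [sub_add_eq_sub_sub] using (S.adj_add_one (n - i - 1)).symm
  adj_one := by rw [show (n : ℤ) - 1 = -1 + n by ring, S.periodic]; exact S.adj_neg_one
  adj_neg_one := by rw [show (n : ℤ) - -1 = 1 + n by ring, S.periodic]; exact S.adj_one
  not_adj_last g w hw hg := S.not_adj_last (fun i => n - g i) (1 - w)
    (fun i hi => by have := hw i hi; omega) (fun i hi j hj h => hg i hi j hj (by omega))

theorem adj_sub_of_isChord (hc : IsChord G f n p q) : G.Adj (f (p - 1)) (f (q + 1 - n)) := by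
  rw [S.periodic.sub_eq]
  exact hc.adj

/- Each of the following lemmas refutes its edges by the longer cycle in the comment above it;
`…` runs along `C` in steps of `±1`. -/

-- `u, f (j + 1), …, f (j + n), u`
theorem not_adj_add_one {j : ℤ} (hj : G.Adj u (f j)) : ¬ G.Adj u (f (j + 1)) := fun hj₁ => by
  have := S.three_le
  refine S.not_adj_last (fun i => j + 1 + i) (j + 1) (fun i _ => by omega)
    (fun i _ k _ h => by omega) (by simpa using hj₁)
    (fun i _ => S.adj_of_eq_add_one (by push_cast; ring)) ?_
  rw [show j + 1 + ((n - 1 : ℕ) : ℤ) = j + n by omega, S.periodic]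
  exact hj.symm

-- `u, f 1, …, f p, f 0, f (p + 1), …, f (n - 1), u`
theorem not_adj_zero_add_one (hp : 0 < p) (hpn : p + 1 < n) (h : G.Adj (f 0) (f p)) :
    ¬ G.Adj (f 0) (f (p + 1)) := fun h₁ => by
  have := S.three_le
  refine S.not_adj_last (fun i => if i < p then i + 1 else if i = p then 0 else i) 0
    (fun i _ => by split_ifs <;> omega) (fun i _ k _ hik => by split_ifs at hik <;> omega)
    (by rw [if_pos (by omega)]; simpa using S.adj_one) (fun i _ => ?_) ?_
  · split_ifs <;> first
      | omega
      | exact S.adj_of_eq_add_one (by omega)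
      | (convert h.symm using 2; omega)
      | (convert h₁ using 2; omega)
  · rw [if_neg (by omega), if_neg (by omega), ← S.periodic.sub_eq]
    convert S.adj_neg_one.symm using 2
    omega

-- `u, f 1, …, f (p - 1), f 0, f (-1), …, f (p - n), u`
theorem not_adj_of_adj_zero (hp : 1 < p) (hpn : p < n) (h : G.Adj (f (p - 1)) (f 0)) :
    ¬ G.Adj u (f p) := fun h₁ => by
  have := S.three_le
  refine S.not_adj_last (fun i => if i < p - 1 then i + 1 else p - 1 - i) (p - n)
    (fun i _ => by split_ifs <;> omega) (fun i _ k _ hik => by split_ifs at hik <;> omega)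
    (by rw [if_pos (by omega)]; simpa using S.adj_one) (fun i _ => ?_) ?_
  · split_ifs <;> first
      | omega
      | exact S.adj_of_eq_add_one (by omega)
      | exact S.adj_of_add_one_eq (by omega)
      | (convert h using 2 <;> omega)
  · rw [if_neg (by omega), show p - 1 - ((n - 1 : ℕ) : ℤ) = p - n by omega, S.periodic.sub_eq]
    exact h₁.symm

theorem add_one_lt_of_isChord (hc : IsChord G f n p q) (hp : G.Adj u (f p) ∨ G.Adj (f 0) (f p)) :
    q + 1 < n := by
  have := hc.lt_length; have := hc.lt
  by_contra hq
  have hch : G.Adj (f (p - 1)) (f 0) := by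
    simpa [show q + 1 - n = 0 by omega] using S.adj_sub_of_isChord hc
  rcases (show p = 1 ∨ 1 < p by have := hc.pos; omega) with rfl | hp₁
  · exact hch.ne rfl
  rcases hp with hp | hp
  · exact S.not_adj_of_adj_zero hp₁ (by omega) hch hp
  · exact S.not_adj_zero_add_one (p := p - 1) (by omega) (by omega) hch.symm (by simpa using hp)

theorem one_lt_of_isChord (hc : IsChord G f n p q) (hq : G.Adj u (f q) ∨ G.Adj (f 0) (f q)) :
    1 < p := by
  have := S.reflect.add_one_lt_of_isChord hc.reflect (by simpa [S.periodic.eq] using hq)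
  omega

-- `u, f p, …, f q, f 0, …, f (p - 1), f (q + 1 - n), …, f (-1), u`
theorem not_adj_zero_of_isChord (hc : IsChord G f n p q) (hp : G.Adj u (f p)) :
    ¬ G.Adj (f 0) (f q) := fun h => by
  have := S.add_one_lt_of_isChord hc (.inl hp)
  have := hc.pos; have := hc.lt
  have hch := S.adj_sub_of_isChord hc
  refine S.not_adj_last
    (fun i => if i ≤ q - p then p + i else if i ≤ q then i - (q - p + 1) else i - n) (q + 1 - n)
    (fun i _ => by split_ifs <;> omega) (fun i _ k _ hik => by split_ifs at hik <;> omega)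
    (by rw [if_pos (by omega)]; simpa using hp) (fun i _ => ?_) ?_
  · split_ifs <;> first
      | omega
      | exact S.adj_of_eq_add_one (by omega)
      | (convert h.symm using 2 <;> omega)
      | (convert hch using 2 <;> omega)
  · rw [if_neg (by omega), if_neg (by omega)]
    convert S.adj_neg_one.symm using 2
    omega

theorem not_adj_of_isChord (hc : IsChord G f n p q) (hp : G.Adj (f 0) (f p)) :
    ¬ G.Adj u (f q) := fun hq =>
  S.reflect.not_adj_zero_of_isChord hc.reflect (by simpa using hq)
    (by simpa [S.periodic.eq] using hp)

theorem mem_neighborSet_sdiff_of_isChord (hc : IsChord G f n p q)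
    (hp : f p ∈ G.neighborSet u ∪ G.neighborSet (f 0))
    (hq : f q ∈ G.neighborSet u ∪ G.neighborSet (f 0)) :
    (f p ∈ G.neighborSet u \ G.neighborSet (f 0) ∧ f q ∈ G.neighborSet u \ G.neighborSet (f 0)) ∨
    (f p ∈ G.neighborSet (f 0) \ G.neighborSet u ∧ f q ∈ G.neighborSet (f 0) \ G.neighborSet u) := by
  simp only [Set.mem_union, Set.mem_sdiff, SimpleGraph.mem_neighborSet] at *
  have := S.not_adj_zero_of_isChord hc
  have := S.not_adj_of_isChord hc
  tauto

-- `u, f (-1), f 0, …, f (p - 1), f (q + 1 - n), …, f (-2), f p, …, f q, u`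
theorem not_adj_neg_two_left_of_adj (hc : IsChord G f n p q) (hq : q + 2 < n)
    (hq' : G.Adj u (f q)) : ¬ G.Adj (f p) (f (-2)) := fun h => by
  have := S.three_le
  have := hc.pos; have := hc.lt
  have hch := S.adj_sub_of_isChord hc
  refine S.not_adj_last (fun i => if i ≤ p then i - 1 else
      if i ≤ n + p - q - 2 then i - p + q - n else i - n + q + 1) (q + 1 - n)
    (fun i _ => by split_ifs <;> omega) (fun i _ k _ hik => by split_ifs at hik <;> omega)
    (by rw [if_pos (by omega)]; simpa using S.adj_neg_one) (fun i _ => ?_) ?_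
  · split_ifs <;> first
      | omega
      | exact S.adj_of_eq_add_one (by omega)
      | (convert h.symm using 2 <;> omega)
      | (convert hch using 2 <;> omega)
  · rw [if_neg (by omega), if_neg (by omega)]
    convert hq'.symm using 2
    omega

-- `u, f (-1), f 0, …, f (p - 1), f (q + 1 - n), …, f (-2), f q, …, f p, u`
theorem not_adj_neg_two_right_of_adj (hc : IsChord G f n p q) (hq : q + 2 < n)
    (hp' : G.Adj u (f p)) : ¬ G.Adj (f q) (f (-2)) := fun h => by
  have := S.three_le
  have := hc.pos; have := hc.lt
  have hch := S.adj_sub_of_isChord hc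
  refine S.not_adj_last (fun i => if i ≤ p then i - 1 else
      if i ≤ n + p - q - 2 then i - p + q - n else n + p - 1 - i) (q + 1 - n)
    (fun i _ => by split_ifs <;> omega) (fun i _ k _ hik => by split_ifs at hik <;> omega)
    (by rw [if_pos (by omega)]; simpa using S.adj_neg_one) (fun i _ => ?_) ?_
  · split_ifs <;> first
      | omega
      | exact S.adj_of_eq_add_one (by omega)
      | exact S.adj_of_add_one_eq (by omega)
      | (convert h.symm using 2 <;> omega)
      | (convert hch using 2 <;> omega)
  · rw [if_neg (by omega), if_neg (by omega)]
    convert hp'.symm using 2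
    omega

-- `u, f 1, …, f (p - 1), f (q + 1 - n), …, f (-2), f p, …, f q, f 0, f (-1), u`
theorem not_adj_neg_two_left_of_adj_zero (hc : IsChord G f n p q) (hp : 1 < p) (hq : q + 2 < n)
    (hq' : G.Adj (f 0) (f q)) : ¬ G.Adj (f p) (f (-2)) := fun h => by
  have := S.three_le
  have := hc.lt
  have hch := S.adj_sub_of_isChord hc
  refine S.not_adj_last (fun i => if i < p - 1 then i + 1 else
      if i < n + p - q - 3 then i - p + q + 2 - n else
      if i < n - 2 then i - n + q + 3 else if i = n - 2 then 0 else -1) (q + 1 - n)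
    (fun i _ => by split_ifs <;> omega) (fun i _ k _ hik => by split_ifs at hik <;> omega)
    (by rw [if_pos (by omega)]; simpa using S.adj_one) (fun i _ => ?_) ?_
  · split_ifs <;> first
      | omega
      | exact S.adj_of_eq_add_one (by omega)
      | exact S.adj_of_add_one_eq (by omega)
      | (convert h.symm using 2 <;> omega)
      | (convert hq'.symm using 2 <;> omega)
      | (convert hch using 2 <;> omega)
  · rw [if_neg (by omega), if_neg (by omega), if_neg (by omega), if_neg (by omega)]
    exact S.adj_neg_one.symm

-- `u, f 1, …, f (p - 1), f (q + 1 - n), …, f (-2), f q, …, f p, f 0, f (-1), u`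
theorem not_adj_neg_two_right_of_adj_zero (hc : IsChord G f n p q) (hp : 1 < p) (hq : q + 2 < n)
    (hp' : G.Adj (f 0) (f p)) : ¬ G.Adj (f q) (f (-2)) := fun h => by
  have := S.three_le
  have := hc.lt
  have hch := S.adj_sub_of_isChord hc
  refine S.not_adj_last (fun i => if i < p - 1 then i + 1 else
      if i < n + p - q - 3 then i - p + q + 2 - n else
      if i < n - 2 then n + p - 3 - i else if i = n - 2 then 0 else -1) (q + 1 - n)
    (fun i _ => by split_ifs <;> omega) (fun i _ k _ hik => by split_ifs at hik <;> omega)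
    (by rw [if_pos (by omega)]; simpa using S.adj_one) (fun i _ => ?_) ?_
  · split_ifs <;> first
      | omega
      | exact S.adj_of_eq_add_one (by omega)
      | exact S.adj_of_add_one_eq (by omega)
      | (convert h.symm using 2 <;> omega)
      | (convert hp'.symm using 2 <;> omega)
      | (convert hch using 2 <;> omega)
  · rw [if_neg (by omega), if_neg (by omega), if_neg (by omega), if_neg (by omega)]
    exact S.adj_neg_one.symm

theorem not_adj_neg_two_of_isChord (hc : IsChord G f n p q) (hp : G.Adj u (f p) ∨ G.Adj (f 0) (f p))
    (hq : G.Adj u (f q) ∨ G.Adj (f 0) (f q)) :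
    ¬ G.Adj (f p) (f (-2)) ∧ ¬ G.Adj (f q) (f (-2)) := by
  have := S.add_one_lt_of_isChord hc hp
  have := hc.pos; have := hc.lt
  have hp₁ := S.one_lt_of_isChord hc hq
  have hq_last : f (q + 1) = f (-1) ∨ q + 2 < n := by
    rcases (show q + 2 = n ∨ q + 2 < n by omega) with h | h
    · exact .inl (by rw [← S.periodic.sub_eq]; congr 1; omega)
    · exact .inr h
  rcases hp with hp | hp
  · have hq' := hq.resolve_right (S.not_adj_zero_of_isChord hc hp)
    have hq₂ : q + 2 < n := hq_last.resolve_left fun h =>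
      S.not_adj_add_one hq' (h ▸ S.adj_neg_one)
    exact ⟨S.not_adj_neg_two_left_of_adj hc hq₂ hq', S.not_adj_neg_two_right_of_adj hc hq₂ hp⟩
  · have hq' := hq.resolve_left (S.not_adj_of_isChord hc hp)
    have hq₂ : q + 2 < n := hq_last.resolve_left fun h =>
      S.not_adj_zero_add_one (by omega) (by omega) hq' (h ▸ S.adj_of_add_one_eq (by norm_num))
    exact ⟨S.not_adj_neg_two_left_of_adj_zero hc hp₁ hq₂ hq',
      S.not_adj_neg_two_right_of_adj_zero hc hp₁ hq₂ hp⟩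

theorem mem_neighborSet_and_not_adj_of_isChord (hc : IsChord G f n p q)
    (hp : f p ∈ G.neighborSet u ∪ G.neighborSet (f 0))
    (hq : f q ∈ G.neighborSet u ∪ G.neighborSet (f 0)) :
    ((f p ∈ G.neighborSet u \ G.neighborSet (f 0) ∧ f q ∈ G.neighborSet u \ G.neighborSet (f 0)) ∨
      (f p ∈ G.neighborSet (f 0) \ G.neighborSet u ∧ f q ∈ G.neighborSet (f 0) \ G.neighborSet u)) ∧
    ¬ G.Adj (f p) (f (-2)) ∧ ¬ G.Adj (f p) (f 2) ∧ ¬ G.Adj (f q) (f (-2)) ∧ ¬ G.Adj (f q) (f 2) := by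
  obtain ⟨hp₂, hq₂⟩ := S.not_adj_neg_two_of_isChord hc hp hq
  obtain ⟨hq₂', hp₂'⟩ := S.reflect.not_adj_neg_two_of_isChord hc.reflect
    (by simpa [S.periodic.eq] using hq) (by simpa [S.periodic.eq] using hp)
  simp only [sub_sub_cancel, sub_neg_eq_add, S.apply_natCast_add] at hp₂' hq₂'
  exact ⟨S.mem_neighborSet_sdiff_of_isChord hc hp hq, hp₂, hp₂', hq₂, hq₂'⟩

end CycleFrame

theorem IsLongestCycle.cycleFrame [DecidableEq V] {G : SimpleGraph V} {a : V} {c : G.Walk a a}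
    (hc : IsLongestCycle G c) {u v : V} (hu : u ∉ c.support) (hv : v ∈ c.support)
    (hsucc : G.Adj u (cSucc c v)) (hpred : G.Adj u (cPred c v)) :
    CycleFrame G u (cycleAt c v) c.length where
  three_le := hc.1.three_le_length
  periodic := cycleAt_periodic
  adj_add_one i := cSucc_cycleAt hc.1 hv i ▸ adj_cSucc hc.1 (cycleAt_mem_support hc.1 hv i)
  adj_one := by rwa [← zero_add 1, ← cSucc_cycleAt hc.1 hv, cycleAt_zero]
  adj_neg_one := by rwa [← zero_sub 1, ← cPred_cycleAt hc.1 hv, cycleAt_zero]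
  not_adj_last g w hw hg h₀ hstep hlast := by
    have := hc.1.three_le_length
    have hne (i : ℕ) : cycleAt c v (g i) ≠ u := fun h => hu (h ▸ cycleAt_mem_support hc.1 hv _)
    have := hc.le_length_of_injOn (w := fun | 0 => u | i + 1 => cycleAt c v (g i))
      (m := c.length + 1) (by omega) ?_ ?_
      (by rw [Nat.add_sub_cancel, ← Nat.sub_add_cancel (show 1 ≤ c.length by omega)]; exact hlast)
    · omega
    · rintro (_ | i) hi (_ | j) hj h
      · rfl
      · exact absurd h.symm (hne j)
      · exact absurd h (hne i)
      · simp only [Set.mem_Iio] at hi hj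
        have := eq_of_cycleAt_eq hc.1 hv (hw i (by omega)) (hw j (by omega)) h
        exact congrArg (· + 1) (hg i (by omega) j (by omega) this)
    · rintro (_ | i) hi
      · exact h₀
      · exact hstep i (by omega)

theorem stmt17_general {V : Type*} [DecidableEq V] (G : SimpleGraph V)
    {a : V} (c : G.Walk a a) (hc : IsLongestCycle G c)
    (u v : V) (hu : u ∉ c.support) (hv : v ∈ c.support)
    (huv1 : G.Adj u (cSucc c v)) (huv2 : G.Adj u (cPred c v))
    (B : Set V) (hB : B = G.neighborSet u ∪ G.neighborSet v)
    (bp bq a' c' : V) (hbp : bp ∈ B) (hbq : bq ∈ B) (horder : bq ∈ arc c bp v)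
    (ha' : a' = cPred c bp) (hc' : c' = cSucc c bq) (hadj : G.Adj a' c') :
    ((bp ∈ G.neighborSet u \ G.neighborSet v ∧ bq ∈ G.neighborSet u \ G.neighborSet v) ∨
     (bp ∈ G.neighborSet v \ G.neighborSet u ∧ bq ∈ G.neighborSet v \ G.neighborSet u)) ∧
    ¬ G.Adj bp (cPred c (cPred c v)) ∧ ¬ G.Adj bp (cSucc c (cSucc c v)) ∧
    ¬ G.Adj bq (cPred c (cPred c v)) ∧ ¬ G.Adj bq (cSucc c (cSucc c v)) := by
  obtain ⟨i, k, hi, hik, hkn, hkv, rfl⟩ := horder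
  subst B a' c'
  obtain rfl := eq_cycleAt_of_iterate_cSucc hc.1 hv (mem_support_of_iterate_cSucc (hkv ▸ hv))
    hkn.le hkv
  have hv₀ : cycleAt c v 0 = v := cycleAt_zero
  have hpred₂ : cPred c (cPred c v) = cycleAt c v (-2) := by
    conv_lhs => rw [← hv₀, cPred_cycleAt hc.1 hv, cPred_cycleAt hc.1 hv]
    norm_num
  have hsucc₂ : cSucc c (cSucc c v) = cycleAt c v 2 := by
    conv_lhs => rw [← hv₀, cSucc_cycleAt hc.1 hv, cSucc_cycleAt hc.1 hv]
    norm_num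
  simp only [cPred_cycleAt hc.1 hv, iterate_cSucc_cycleAt hc.1 hv, cSucc_cycleAt hc.1 hv] at hadj
  have := (hc.cycleFrame hu hv huv1 huv2).mem_neighborSet_and_not_adj_of_isChord ⟨by omega, by omega, by omega, hadj⟩
    (by rwa [hv₀]) (by rwa [hv₀, ← iterate_cSucc_cycleAt hc.1 hv])
  rw [hv₀] at this
  rwa [hpred₂, hsucc₂, iterate_cSucc_cycleAt hc.1 hv]

theorem stmt17 {V : Type*} [Fintype V] [DecidableEq V] (G : SimpleGraph V)
    (hn : 3 ≤ Fintype.card V) (htough : OneTough G) (hsig : Fintype.card V ≤ sigma3 G)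
    (hham : ¬ G.IsHamiltonian) {a : V} (c : G.Walk a a) (hc : IsLongestCycle G c)
    (u v : V) (hu : u ∉ c.support) (hv : v ∈ c.support)
    (huv1 : G.Adj u (cSucc c v)) (huv2 : G.Adj u (cPred c v))
    (B : Set V) (hB : B = G.neighborSet u ∪ G.neighborSet v)
    (bp bq a' c' : V) (hbp : bp ∈ B) (hbq : bq ∈ B) (horder : bq ∈ arc c bp v)
    (ha' : a' = cPred c bp) (hc' : c' = cSucc c bq) (hac : a' ≠ c') (hadj : G.Adj a' c') :
    ((bp ∈ G.neighborSet u \ G.neighborSet v ∧ bq ∈ G.neighborSet u \ G.neighborSet v) ∨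
     (bp ∈ G.neighborSet v \ G.neighborSet u ∧ bq ∈ G.neighborSet v \ G.neighborSet u)) ∧
    ¬ G.Adj bp (cPred c (cPred c v)) ∧ ¬ G.Adj bp (cSucc c (cSucc c v)) ∧
    ¬ G.Adj bq (cPred c (cPred c v)) ∧ ¬ G.Adj bq (cSucc c (cSucc c v)) :=
  stmt17_general G c hc u v hu hv huv1 huv2 B hB bp bq a' c' hbp hbq horder ha' hc' hadj

end
end Paper
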